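/- Let τ : S_n(ℂ) → S_m(ℂ) be a quantum channel with m ≤ n. Then σ_1(τ) = 1 if and only if m = n and τ(I_n) = I_n (equivalently, the adjoint map τ^* is also a quantum channel). -/

import Mathlib

/-!
Write `P = τ(I)`; then `tr P = n` since `τ` preserves traces. Test `τ` on `X₀ = n^{-1/2} I`.
If `σ₁(τ) = 1` then `‖P‖² ≤ n`, hence `‖P - I‖² = ‖P‖² - 2 tr P + m ≤ m - n ≤ 0`: so `P = I`
and `m = tr P = n`. Conversely, if `τ` is unital, the Kadison–Schwarz identity
`∑ᵢ (Aᵢ X - τ(X) Aᵢ)(Aᵢ X - τ(X) Aᵢ)* = τ(X²) - τ(X)²` together with trace preservation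
gives `‖τ(X)‖ ≤ ‖X‖`, with equality at `X₀ = τ(X₀)`.
-/

open scoped ComplexOrder
open Matrix Kronecker

/-- Frobenius norm of a complex matrix: `√(tr (X Xᴴ))`. -/
noncomputable def frobNorm {n m : Type*} [Fintype n] [Fintype m]
    (X : Matrix n m ℂ) : ℝ :=
  Real.sqrt ((X * Xᴴ).trace.re)

/-- Operator norm `σ₁(τ) = ‖τ‖` of a map between spaces of Hermitian matrices,
with respect to the Frobenius norm. -/
noncomputable def opNorm {n m : Type*} [Fintype n] [Fintype m]
    (τ : Matrix n n ℂ → Matrix m m ℂ) : ℝ :=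
  sSup {c : ℝ | ∃ X : Matrix n n ℂ, X.IsHermitian ∧ frobNorm X ≤ 1 ∧ c = frobNorm (τ X)}

/-- The second singular value of a map between spaces of Hermitian matrices, via the
Courant–Fischer min-max characterization: the infimum over nonzero Hermitian `U` of the
norm of `τ` restricted to the orthogonal complement of `U`. -/
noncomputable def sigma2 {n m : Type*} [Fintype n] [Fintype m]
    (τ : Matrix n n ℂ → Matrix m m ℂ) : ℝ :=
  sInf {c : ℝ | ∃ U : Matrix n n ℂ, U.IsHermitian ∧ U ≠ 0 ∧
    c = sSup {d : ℝ | ∃ X : Matrix n n ℂ, X.IsHermitian ∧ frobNorm X ≤ 1 ∧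
      (U * X).trace.re = 0 ∧ d = frobNorm (τ X)}}

/-- Largest eigenvalue `λ₁` of a Hermitian matrix (junk value `0` otherwise). -/
noncomputable def lambdaMax {n : Type*} [Fintype n] [DecidableEq n]
    (Y : Matrix n n ℂ) : ℝ :=
  if hY : Y.IsHermitian then ⨆ i, hY.eigenvalues i else 0

/-- von Neumann entropy `H(Y) = -∑ λᵢ log λᵢ` of a Hermitian matrix
(junk value `0` otherwise); note `Real.log 0 = 0`. -/
noncomputable def entropy {n : Type*} [Fintype n] [DecidableEq n]
    (Y : Matrix n n ℂ) : ℝ :=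
  if hY : Y.IsHermitian then -∑ i, hY.eigenvalues i * Real.log (hY.eigenvalues i) else 0

/-- Minimum output entropy of a channel: the infimum of `H(τ X)` over density matrices `X`. -/
noncomputable def minEntropy {n m : Type*} [Fintype n] [DecidableEq n] [Fintype m] [DecidableEq m]
    (τ : Matrix n n ℂ → Matrix m m ℂ) : ℝ :=
  sInf {h : ℝ | ∃ X : Matrix n n ℂ, X.PosSemidef ∧ X.trace = 1 ∧ h = entropy (τ X)}

/-- Eigenvalues of a Hermitian matrix arranged in decreasing order:
`eigsDesc Y 0 = λ₁ ≥ eigsDesc Y 1 = λ₂ ≥ …` (junk value `0` if not Hermitian). -/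
noncomputable def eigsDesc {n : ℕ} (Y : Matrix (Fin n) (Fin n) ℂ) : Fin n → ℝ :=
  if hY : Y.IsHermitian then fun i => hY.eigenvalues (Tuple.sort hY.eigenvalues i.rev)
  else fun _ => 0

/-- The sum `λ₁ + ⋯ + λ_k` of the `k` largest eigenvalues of a Hermitian matrix. -/
noncomputable def sumTopEigs {n : ℕ} (k : ℕ) (Y : Matrix (Fin n) (Fin n) ℂ) : ℝ :=
  ∑ i : Fin n, if (i : ℕ) < k then eigsDesc Y i else 0

section Frobenius

variable {m n : Type*} [Fintype m] [Fintype n]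

lemma zero_le_trace_mul_conjTranspose (X : Matrix m n ℂ) : 0 ≤ (X * Xᴴ).trace :=
  (posSemidef_self_mul_conjTranspose X).trace_nonneg

lemma frobNorm_sq (X : Matrix m n ℂ) : frobNorm X ^ 2 = (X * Xᴴ).trace.re :=
  Real.sq_sqrt (Complex.nonneg_iff.mp (zero_le_trace_mul_conjTranspose X)).1

lemma frobNorm_eq_zero_iff {X : Matrix m n ℂ} : frobNorm X = 0 ↔ X = 0 := by
  obtain ⟨hre, him⟩ := Complex.nonneg_iff.mp (zero_le_trace_mul_conjTranspose X)
  rw [frobNorm, Real.sqrt_eq_zero hre, ← trace_mul_conjTranspose_self_eq_zero_iff,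
    Complex.ext_iff, ← him, Complex.zero_re, Complex.zero_im]
  exact ⟨fun h => ⟨h, rfl⟩, And.left⟩

lemma frobNorm_smul (c : ℂ) (X : Matrix m n ℂ) : frobNorm (c • X) = ‖c‖ * frobNorm X := by
  have hc : c * star c = ((‖c‖ ^ 2 : ℝ) : ℂ) := by
    rw [Complex.star_def, Complex.mul_conj', Complex.ofReal_pow]
  rw [frobNorm, frobNorm, conjTranspose_smul, Matrix.smul_mul, Matrix.mul_smul, smul_smul, hc,
    trace_smul, smul_eq_mul, Complex.re_ofReal_mul, Real.sqrt_mul (by positivity),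
    Real.sqrt_sq (norm_nonneg c)]

lemma frobNorm_one [DecidableEq n] : frobNorm (1 : Matrix n n ℂ) = √(Fintype.card n) := by
  simp [frobNorm]

lemma frobNorm_sub_one_sq [DecidableEq n] {P : Matrix n n ℂ} (hP : P.IsHermitian) :
    frobNorm (P - 1) ^ 2 = frobNorm P ^ 2 - 2 * P.trace.re + Fintype.card n := by
  have hsq : (P - 1) * (P - 1) = P * P - P - P + 1 := by noncomm_ring
  rw [frobNorm_sq, frobNorm_sq, conjTranspose_sub, conjTranspose_one, hP.eq, hsq]
  simp only [trace_add, trace_sub, trace_one, Complex.add_re, Complex.sub_re,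
    Complex.natCast_re]
  ring

lemma eq_one_of_frobNorm_sq_le_trace [DecidableEq n] {P : Matrix n n ℂ} (hP : P.IsHermitian)
    (hcard : (Fintype.card n : ℝ) ≤ P.trace.re) (hnorm : frobNorm P ^ 2 ≤ P.trace.re) :
    P = 1 := by
  have hsq : frobNorm (P - 1) ^ 2 ≤ 0 := by
    rw [frobNorm_sub_one_sq hP]
    linarith
  exact sub_eq_zero.mp (frobNorm_eq_zero_iff.mp (pow_eq_zero_iff two_ne_zero |>.mp
    (le_antisymm hsq (sq_nonneg _))))

end Frobenius

section OpNorm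

variable {m n : Type*} [Fintype m] [Fintype n]

lemma frobNorm_apply_le_opNorm {τ : Matrix n n ℂ → Matrix m m ℂ} (hτ : opNorm τ ≠ 0)
    {X : Matrix n n ℂ} (hX : X.IsHermitian) (hX1 : frobNorm X ≤ 1) :
    frobNorm (τ X) ≤ opNorm τ := by
  have hbdd : BddAbove {c : ℝ | ∃ X : Matrix n n ℂ, X.IsHermitian ∧ frobNorm X ≤ 1 ∧
      c = frobNorm (τ X)} := by
    by_contra hb
    exact hτ (Real.sSup_of_not_bddAbove hb)
  exact le_csSup hbdd ⟨X, hX, hX1, rfl⟩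

lemma opNorm_eq_one_of_contractive {τ : Matrix n n ℂ → Matrix m m ℂ}
    (hτ : ∀ X, X.IsHermitian → frobNorm (τ X) ≤ frobNorm X) {X₀ : Matrix n n ℂ}
    (hX₀ : X₀.IsHermitian) (hX₀1 : frobNorm X₀ = 1) (hτX₀ : frobNorm (τ X₀) = 1) :
    opNorm τ = 1 := by
  refine IsGreatest.csSup_eq ⟨⟨X₀, hX₀, hX₀1.le, hτX₀.symm⟩, ?_⟩
  rintro _ ⟨X, hX, hX1, rfl⟩
  exact (hτ X hX).trans hX1

end OpNorm

section Kraus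

variable {ι m n : Type*} [Fintype ι] [Fintype n]

def krausMap (A : ι → Matrix m n ℂ) (X : Matrix n n ℂ) : Matrix m m ℂ :=
  ∑ i, A i * X * (A i)ᴴ

variable (A : ι → Matrix m n ℂ)

lemma krausMap_smul (c : ℂ) (X : Matrix n n ℂ) : krausMap A (c • X) = c • krausMap A X := by
  simp only [krausMap, Finset.smul_sum, Matrix.mul_smul, Matrix.smul_mul]

lemma Matrix.IsHermitian.krausMap {X : Matrix n n ℂ} (hX : X.IsHermitian) :
    (krausMap A X).IsHermitian :=
  isSelfAdjoint_sum _ fun i _ => isHermitian_mul_mul_conjTranspose (A i) hX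

lemma trace_krausMap [Fintype m] [DecidableEq n] (hA : ∑ i, (A i)ᴴ * A i = 1)
    (X : Matrix n n ℂ) : (krausMap A X).trace = X.trace := by
  simp only [krausMap, trace_sum, fun i => trace_mul_cycle (A i) X (A i)ᴴ]
  rw [← trace_sum, ← Finset.sum_mul, hA, Matrix.one_mul]

lemma sum_mul_conjTranspose_eq_krausMap_mul_self_sub [Fintype m] [DecidableEq m] [DecidableEq n]
    (hP : krausMap A 1 = 1) {X : Matrix n n ℂ} (hX : X.IsHermitian) :
    ∑ i, (A i * X - krausMap A X * A i) * (A i * X - krausMap A X * A i)ᴴ =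
      krausMap A (X * X) - krausMap A X * krausMap A X := by
  set T := krausMap A X with hT
  have hTH : Tᴴ = T := (hX.krausMap A).eq
  have hexpand : ∀ i, (A i * X - T * A i) * (A i * X - T * A i)ᴴ =
      A i * (X * X) * (A i)ᴴ - A i * X * (A i)ᴴ * T - T * (A i * X * (A i)ᴴ)
        + T * (A i * (1 : Matrix n n ℂ) * (A i)ᴴ) * T := by
    intro i
    simp only [conjTranspose_sub, conjTranspose_mul, hX.eq, hTH, Matrix.sub_mul, Matrix.mul_sub,
      Matrix.mul_assoc, Matrix.mul_one]
    abel
  simp only [hexpand, Finset.sum_add_distrib, Finset.sum_sub_distrib, ← Finset.sum_mul,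
    ← Finset.mul_sum]
  rw [← krausMap, ← krausMap, ← hT, ← krausMap, hP]
  noncomm_ring

lemma frobNorm_krausMap_le [Fintype m] [DecidableEq m] [DecidableEq n]
    (hA : ∑ i, (A i)ᴴ * A i = 1) (hP : krausMap A 1 = 1) {X : Matrix n n ℂ}
    (hX : X.IsHermitian) : frobNorm (krausMap A X) ≤ frobNorm X := by
  have hsum : 0 ≤ (∑ i, (A i * X - krausMap A X * A i) *
      (A i * X - krausMap A X * A i)ᴴ).trace.re := by
    rw [trace_sum, Complex.re_sum]
    exact Finset.sum_nonneg fun i _ => frobNorm_sq (A i * X - krausMap A X * A i) ▸ sq_nonneg _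
  rw [sum_mul_conjTranspose_eq_krausMap_mul_self_sub A hP hX, trace_sub, trace_krausMap A hA,
    Complex.sub_re] at hsum
  have hsq : frobNorm (krausMap A X) ^ 2 ≤ frobNorm X ^ 2 := by
    rw [frobNorm_sq, frobNorm_sq, hX.eq, (hX.krausMap A).eq]
    linarith
  exact (pow_le_pow_iff_left₀ (Real.sqrt_nonneg _) (Real.sqrt_nonneg _) two_ne_zero).mp hsq

end Kraus

/-- For a quantum channel τ : Sₙ(ℂ) → Sₘ(ℂ) with m ≤ n,
one has σ₁(τ) = 1 if and only if m = n and τ(Iₙ) = Iₙ (i.e. ∑ᵢ Aᵢ Aᵢ* = I,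
equivalently the adjoint τ* is also a quantum channel). -/
theorem stmt_12 {n m l : ℕ} (hn : 0 < n) (hmn : m ≤ n)
    (A : Fin l → Matrix (Fin m) (Fin n) ℂ)
    (hA : ∑ i, (A i)ᴴ * A i = 1) :
    opNorm (fun (X : Matrix (Fin n) (Fin n) ℂ) => ∑ i, A i * X * (A i)ᴴ) = 1 ↔
      m = n ∧ ∑ i, A i * (1 : Matrix (Fin n) (Fin n) ℂ) * (A i)ᴴ = 1 := by
  change opNorm (krausMap A) = 1 ↔ m = n ∧ krausMap A 1 = 1
  have hsqrt : 0 < √(n : ℝ) := Real.sqrt_pos.mpr (Nat.cast_pos.mpr hn)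
  set X₀ : Matrix (Fin n) (Fin n) ℂ := (((√n)⁻¹ : ℝ) : ℂ) • 1
  have hX₀ : X₀.IsHermitian := isHermitian_one.smul (Complex.conj_ofReal _)
  have hX₀1 : frobNorm X₀ = 1 := by
    rw [frobNorm_smul, frobNorm_one, Complex.norm_real, Real.norm_of_nonneg (by positivity),
      Fintype.card_fin, inv_mul_cancel₀ hsqrt.ne']
  have htr : (krausMap A 1).trace.re = n := by simp [trace_krausMap A hA]
  constructor
  · intro h
    have hτX₀ := frobNorm_apply_le_opNorm (h ▸ one_ne_zero) hX₀ hX₀1.le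
    rw [h, krausMap_smul, frobNorm_smul, Complex.norm_real, Real.norm_of_nonneg (by positivity),
      inv_mul_le_iff₀ hsqrt, mul_one] at hτX₀
    have hnorm : frobNorm (krausMap A 1) ^ 2 ≤ (krausMap A 1).trace.re := by
      rw [htr, ← Real.sq_sqrt (Nat.cast_nonneg n)]
      exact pow_le_pow_left₀ (Real.sqrt_nonneg _) hτX₀ 2
    have hP := eq_one_of_frobNorm_sq_le_trace (isHermitian_one.krausMap A)
      (by simpa [htr] using hmn) hnorm
    refine ⟨?_, hP⟩
    rw [hP] at htr
    simpa using htr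
  · rintro ⟨rfl, hP⟩
    refine opNorm_eq_one_of_contractive (fun X hX => frobNorm_krausMap_le A hA hP hX) hX₀ hX₀1 ?_
    rw [krausMap_smul, hP]
    exact hX₀1
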